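/- arXiv:2511.03085 — 2 statements merged into one kernel-verified Lean document; each statement's English description precedes it below -/
import Mathlib

section
/- Let k ∈ {4,5}. Let G be a graph, H a subgraph of G, and X, Y two disjoint subsets of the vertex set of H. Let a_1, a_2 be positive integers with a_2 − a_1 = 1 or a_2 − a_1 = 4, such that for every x ∈ X, y ∈ Y, and i ∈ {1,2}, H has an (x,y)-path of length a_i. Suppose that G has either k−1 admissible (X,Y)-paths of consecutive lengths, or k−2 admissible (X,Y)-paths whose lengths form an arithmetic progression with common difference 2, in each case with all internal vertices outside V(H). Then G has k admissible cycles. -/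
open SimpleGraph

/-- `G` has a cycle of length `n`. -/
def HasCycleLen {V : Type*} (G : SimpleGraph V) (n : ℕ) : Prop :=
  ∃ (v : V) (c : G.Walk v v), c.IsCycle ∧ c.length = n

/-- `G` contains `k` admissible cycles: `k` cycles whose lengths form an arithmetic
progression with common difference 1 or 2. -/
def HasAdmissibleCycles {V : Type*} (G : SimpleGraph V) (k : ℕ) : Prop :=
  ∃ a d : ℕ, (d = 1 ∨ d = 2) ∧ ∀ i < k, HasCycleLen G (a + i * d)

/-- The subgraph `H` of `G` contains an `(x,y)`-path of length `n`. -/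
def SubgraphPathLen {V : Type*} {G : SimpleGraph V} (H : G.Subgraph)
    (x y : V) (n : ℕ) : Prop :=
  ∃ (hx : x ∈ H.verts) (hy : y ∈ H.verts)
    (p : H.coe.Walk ⟨x, hx⟩ ⟨y, hy⟩), p.IsPath ∧ p.length = n

/-- `G` contains an `(X,Y)`-path of length `n` all of whose internal vertices avoid
the set `A`. -/
def XYPathLenAvoiding {V : Type*} (G : SimpleGraph V) (A X Y : Set V) (n : ℕ) : Prop :=
  ∃ (x y : V) (p : G.Walk x y), p.IsPath ∧ x ∈ X ∧ y ∈ Y ∧ p.length = n ∧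
    (∀ v ∈ p.support, v ≠ x → v ≠ y → v ∉ X ∪ Y) ∧
    (∀ v ∈ p.support, v ≠ x → v ≠ y → v ∉ A)


lemma path_no_end_edge {V : Type*} {G : SimpleGraph V} {x y : V} {p : G.Walk x y}
    (hp : p.IsPath) (h2 : 2 ≤ p.length) : s(x, y) ∉ p.edges := by
  cases p with
  | nil => simp
  | @cons _ w _ h' p' =>
    simp only [Walk.edges_cons, List.mem_cons]
    rintro (heq | hm)
    · rcases Sym2.eq_iff.1 heq with ⟨-, rfl⟩ | ⟨h1, h2'⟩
      · have hp' : p'.IsPath := (Walk.cons_isPath_iff _ _).1 hp |>.1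
        rw [Walk.isPath_iff_eq_nil] at hp'
        subst hp'
        simp at h2
      · exact h'.ne h1
    · exact ((Walk.cons_isPath_iff _ _).1 hp).2 (Walk.fst_mem_support_of_mem_edges p' hm)

lemma glue_cycle {V : Type*} {G : SimpleGraph V} {x y : V} (_hxy : x ≠ y)
    (p q : G.Walk x y) (hp : p.IsPath) (hq : q.IsPath) (h2 : 2 ≤ p.length)
    (hint : ∀ v ∈ p.support, v ≠ x → v ≠ y → v ∉ q.support) :
    (p.append q.reverse).IsCycle := by
  have hsxy : s(x, y) ∉ p.edges := path_no_end_edge hp h2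
  have hedis : ∀ e ∈ p.edges, e ∉ q.edges := by
    rintro e he he'
    induction e using Sym2.ind with
    | _ u v =>
      have hu : u ∈ p.support := Walk.fst_mem_support_of_mem_edges p he
      have hv : v ∈ p.support := Walk.snd_mem_support_of_mem_edges p he
      have hu' : u ∈ q.support := Walk.fst_mem_support_of_mem_edges q he'
      have hv' : v ∈ q.support := Walk.snd_mem_support_of_mem_edges q he'
      have huv : u ≠ v := (Walk.adj_of_mem_edges p he).ne
      by_cases hux : u = x
      · by_cases hvy : v = y
        · subst hux; subst hvy; exact hsxy he
        · by_cases hvx : v = x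
          · exact huv (hux.trans hvx.symm)
          · exact hint v hv hvx hvy hv'
      · by_cases huy : u = y
        · by_cases hvx : v = x
          · subst huy; subst hvx
            exact hsxy (by rwa [Sym2.eq_swap] at he)
          · by_cases hvy : v = y
            · exact huv (huy.trans hvy.symm)
            · exact hint v hv hvx hvy hv'
        · exact hint u hu hux huy hu'
  have htrail : (p.append q.reverse).IsTrail := by
    rw [Walk.isTrail_def, Walk.edges_append, Walk.edges_reverse]
    refine List.Nodup.append hp.edges_nodup (List.nodup_reverse.2 hq.edges_nodup) ?_
    intro e he he'
    exact hedis e he (by simpa using he')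
  have hst : (p.append q.reverse).support.tail.Nodup := by
    rw [Walk.tail_support_append]
    refine List.Nodup.append ((List.tail_sublist _).nodup hp.support_nodup)
      ((List.tail_sublist _).nodup hq.reverse.support_nodup) ?_
    intro v hv hv'
    have hvp : v ∈ p.support := List.mem_of_mem_tail hv
    have hvx : v ≠ x := by
      rintro rfl
      have := hp.support_nodup
      rw [p.support_eq_cons] at this
      exact (List.nodup_cons.1 this).1 hv
    have hvy : v ≠ y := by
      rintro rfl
      have := hq.reverse.support_nodup
      rw [q.reverse.support_eq_cons] at this
      exact (List.nodup_cons.1 this).1 hv'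
    have hvq : v ∈ q.support := by
      have : v ∈ q.reverse.support := List.mem_of_mem_tail hv'
      rwa [Walk.support_reverse, List.mem_reverse] at this
    exact hint v hvp hvx hvy hvq
  have hne : (p.append q.reverse) ≠ Walk.nil := by
    intro h
    have h0 : (p.append q.reverse).length = 0 := by rw [h]; rfl
    rw [Walk.length_append] at h0
    omega
  exact (Walk.isCycle_def _).2 ⟨htrail, hne, hst⟩

lemma cycle_of_XY {V : Type*} {G : SimpleGraph V} {H : G.Subgraph} {X Y : Set V}
    (hXY : Disjoint X Y) {a : ℕ}
    (hA : ∀ x ∈ X, ∀ y ∈ Y, SubgraphPathLen H x y a)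
    {n : ℕ} (hn : 2 ≤ n) (hP : XYPathLenAvoiding G H.verts X Y n) :
    HasCycleLen G (n + a) := by
  obtain ⟨x, y, p, hp, hxX, hyY, hlen, hXYint, hHint⟩ := hP
  obtain ⟨hx, hy, q0, hq0, hq0len⟩ := hA x hxX y hyY
  have hxy : x ≠ y := fun h => Set.disjoint_left.1 hXY hxX (h ▸ hyY)
  let q : G.Walk x y := q0.map H.hom
  have hq : q.IsPath := Walk.map_isPath_of_injective Subgraph.hom_injective hq0
  have hqsup : ∀ v ∈ q.support, v ∈ H.verts := by
    intro v hv
    rw [show q.support = q0.support.map H.hom from Walk.support_map _ _, List.mem_map] at hv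
    obtain ⟨u, -, rfl⟩ := hv
    exact u.2
  have hcyc := glue_cycle hxy p q hp hq (by omega)
    (fun v hv h1 h2 hvq => hHint v hv h1 h2 (hqsup v hvq))
  refine ⟨x, p.append q.reverse, hcyc, ?_⟩
  rw [Walk.length_append, Walk.length_reverse]
  have hqa : q.length = a := by
    show (q0.map H.hom).length = a
    rw [Walk.length_map]; exact hq0len
  omega

/-- Let `k ∈ {4,5}`. Given `(x,y)`-paths of lengths `a₁` and `a₂`
(`a₂ - a₁ ∈ {1,4}`) in a subgraph `H` for all `x ∈ X`, `y ∈ Y`, and either `k-1`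
admissible `(X,Y)`-paths of consecutive lengths or `k-2` admissible `(X,Y)`-paths
with common difference 2, all with internal vertices outside `V(H)`, the graph `G`
has `k` admissible cycles. -/
theorem stmt11 {V : Type*} (G : SimpleGraph V) (H : G.Subgraph) (X Y : Set V)
    (k : ℕ) (hk : k = 4 ∨ k = 5)
    (hX : X ⊆ H.verts) (hY : Y ⊆ H.verts) (hXY : Disjoint X Y)
    (a₁ a₂ : ℕ) (ha₁ : 1 ≤ a₁) (hd : a₂ = a₁ + 1 ∨ a₂ = a₁ + 4)
    (hA : ∀ x ∈ X, ∀ y ∈ Y, SubgraphPathLen H x y a₁ ∧ SubgraphPathLen H x y a₂)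
    (hB : (∃ b : ℕ, 2 ≤ b ∧ ∀ j < k - 1, XYPathLenAvoiding G H.verts X Y (b + j)) ∨
          (∃ b : ℕ, 2 ≤ b ∧ ∀ j < k - 2, XYPathLenAvoiding G H.verts X Y (b + 2 * j))) :
    HasAdmissibleCycles G k := by
  have key : ∀ n, 2 ≤ n → XYPathLenAvoiding G H.verts X Y n →
      HasCycleLen G (n + a₁) ∧ HasCycleLen G (n + a₂) := by
    intro n hn hP
    exact ⟨cycle_of_XY hXY (fun x hx y hy => (hA x hx y hy).1) hn hP,
           cycle_of_XY hXY (fun x hx y hy => (hA x hx y hy).2) hn hP⟩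
  have trans : ∀ {m n : ℕ}, m = n → HasCycleLen G m → HasCycleLen G n :=
    fun h hc => h ▸ hc
  obtain ⟨b, hb, hBp⟩ | ⟨b, hb, hBp⟩ := hB
  · have c1 : ∀ j, j < k - 1 → HasCycleLen G (b + j + a₁) :=
      fun j hj => (key _ (by omega) (hBp j hj)).1
    have c2 : ∀ j, j < k - 1 → HasCycleLen G (b + j + a₂) :=
      fun j hj => (key _ (by omega) (hBp j hj)).2
    rcases hd with rfl | rfl
    · refine ⟨b + a₁, 1, Or.inl rfl, ?_⟩
      intro i hi
      rcases hk with rfl | rfl <;> interval_cases i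
      · exact trans (by omega) (c1 0 (by omega))
      · exact trans (by omega) (c1 1 (by omega))
      · exact trans (by omega) (c1 2 (by omega))
      · exact trans (by omega) (c2 2 (by omega))
      · exact trans (by omega) (c1 0 (by omega))
      · exact trans (by omega) (c1 1 (by omega))
      · exact trans (by omega) (c1 2 (by omega))
      · exact trans (by omega) (c1 3 (by omega))
      · exact trans (by omega) (c2 3 (by omega))
    · rcases hk with rfl | rfl
      · refine ⟨b + a₁, 2, Or.inr rfl, ?_⟩
        intro i hi
        interval_cases i
        · exact trans (by omega) (c1 0 (by omega))
        · exact trans (by omega) (c1 2 (by omega))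
        · exact trans (by omega) (c2 0 (by omega))
        · exact trans (by omega) (c2 2 (by omega))
      · refine ⟨b + a₁, 1, Or.inl rfl, ?_⟩
        intro i hi
        interval_cases i
        · exact trans (by omega) (c1 0 (by omega))
        · exact trans (by omega) (c1 1 (by omega))
        · exact trans (by omega) (c1 2 (by omega))
        · exact trans (by omega) (c1 3 (by omega))
        · exact trans (by omega) (c2 0 (by omega))
  · have c1 : ∀ j, j < k - 2 → HasCycleLen G (b + 2 * j + a₁) :=
      fun j hj => (key _ (by omega) (hBp j hj)).1
    have c2 : ∀ j, j < k - 2 → HasCycleLen G (b + 2 * j + a₂) :=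
      fun j hj => (key _ (by omega) (hBp j hj)).2
    rcases hd with rfl | rfl
    · refine ⟨b + a₁, 1, Or.inl rfl, ?_⟩
      intro i hi
      rcases hk with rfl | rfl <;> interval_cases i
      · exact trans (by omega) (c1 0 (by omega))
      · exact trans (by omega) (c2 0 (by omega))
      · exact trans (by omega) (c1 1 (by omega))
      · exact trans (by omega) (c2 1 (by omega))
      · exact trans (by omega) (c1 0 (by omega))
      · exact trans (by omega) (c2 0 (by omega))
      · exact trans (by omega) (c1 1 (by omega))
      · exact trans (by omega) (c2 1 (by omega))
      · exact trans (by omega) (c1 2 (by omega))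
    · refine ⟨b + a₁, 2, Or.inr rfl, ?_⟩
      intro i hi
      rcases hk with rfl | rfl <;> interval_cases i
      · exact trans (by omega) (c1 0 (by omega))
      · exact trans (by omega) (c1 1 (by omega))
      · exact trans (by omega) (c2 0 (by omega))
      · exact trans (by omega) (c2 1 (by omega))
      · exact trans (by omega) (c1 0 (by omega))
      · exact trans (by omega) (c1 1 (by omega))
      · exact trans (by omega) (c1 2 (by omega))
      · exact trans (by omega) (c2 1 (by omega))
      · exact trans (by omega) (c2 2 (by omega))
end

section
/- Let G be a graph, C₁ an even cycle of G, and C₂ an odd cycle of G. Suppose one of the following holds: (1) C₁ and C₂ are vertex-disjoint and there exist two vertex-disjoint paths P¹, P² from C₁ to C₂ whose end-vertices on C₁ are quasi-diagonal on C₁; or (2) C₁ and C₂ have exactly one common vertex u and there exists a path from C₁ − u to C₂ − u avoiding u whose end-vertex on C₁ is quasi-diagonal to u on C₁. Then G contains two cycles of consecutive odd lengths, i.e., two cycles of odd lengths differing by exactly 2. -/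
open SimpleGraph


namespace Stmt17Aux

variable {V : Type*} {G : SimpleGraph V}

lemma path_append {x y z : V} {P : G.Walk x y} {Q : G.Walk y z}
    (hP : P.IsPath) (hQ : Q.IsPath)
    (hdisj : ∀ v, v ∈ P.support → v ∈ Q.support → v = y) : (P.append Q).IsPath := by
  apply Walk.IsPath.mk'
  rw [Walk.support_append, List.nodup_append']
  refine ⟨hP.support_nodup, hQ.support_nodup.tail, ?_⟩
  intro v hv1 hv2
  have hvQ : v ∈ Q.support := List.mem_of_mem_tail hv2
  have := hdisj v hv1 hvQ
  subst this
  have := hQ.support_nodup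
  rw [Q.support_eq_cons] at this
  exact (List.nodup_cons.mp this).1 hv2

lemma glue {x y : V} {P : G.Walk x y} {Q : G.Walk y x}
    (hP : P.IsPath) (hQ : Q.IsPath) (hlen : 2 ≤ P.length)
    (hdisj : ∀ v, v ∈ P.support → v ∈ Q.support → v = x ∨ v = y) :
    (P.append Q).IsCycle := by
  cases P with
  | nil => simp at hlen
  | @cons _ v₁ _ h P' =>
    rw [Walk.cons_append, Walk.cons_isCycle_iff]
    rw [Walk.cons_isPath_iff] at hP
    obtain ⟨hP', hxP'⟩ := hP
    constructor
    · apply path_append hP' hQ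
      intro v hv1 hv2
      rcases hdisj v (by simp [hv1]) hv2 with rfl | rfl
      · exact absurd hv1 hxP'
      · rfl
    · rw [Walk.edges_append]
      intro hmem
      rcases List.mem_append.mp hmem with h1 | h2
      · exact hxP' (Walk.fst_mem_support_of_mem_edges _ h1)
      · have hv₁Q : v₁ ∈ Q.support := Walk.snd_mem_support_of_mem_edges _ h2
        rcases hdisj v₁ (by simp) hv₁Q with rfl | rfl
        · exact hxP' P'.start_mem_support
        · have := (Walk.isPath_iff_eq_nil (p := P')).mp hP'
          subst this; simp at hlen

lemma cycle_split [DecidableEq V] {u z : V} {c : G.Walk u u}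
    (hc : c.IsCycle) (hz : z ∈ c.support) (hzu : z ≠ u) :
    ∃ (a : G.Walk u z) (b : G.Walk u z), a.IsPath ∧ b.IsPath ∧
      a.length + b.length = c.length ∧ 1 ≤ a.length ∧ 1 ≤ b.length ∧
      (∀ v, v ∈ a.support → v ∈ b.support → v = u ∨ v = z) ∧
      (∀ v, v ∈ a.support → v ∈ c.support) ∧ (∀ v, v ∈ b.support → v ∈ c.support) := by
  cases c with
  | nil => exact absurd rfl hc.ne_nil
  | @cons _ w₀ _ h₀ c₀ =>
    rw [Walk.cons_isCycle_iff] at hc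
    obtain ⟨hc₀, _⟩ := hc
    have hz' : z ∈ c₀.support := by
      rcases (by simpa using hz : z = u ∨ z ∈ c₀.support) with rfl | h
      · exact absurd rfl hzu
      · exact h
    set t' := c₀.takeUntil z hz' with ht'def
    set d' := c₀.dropUntil z hz' with hd'def
    have hspec : t'.append d' = c₀ := c₀.take_spec hz'
    have ht'p : t'.IsPath := hc₀.takeUntil hz'
    have hd'p : d'.IsPath := hc₀.dropUntil hz'
    have hnodup : c₀.support.Nodup := hc₀.support_nodup
    have hdisjsup : ∀ v, v ∈ t'.support → v ∈ d'.support.tail → False := by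
      intro v hv1 hv2
      have : (t'.support ++ d'.support.tail).Nodup := by
        rw [← Walk.support_append, hspec]; exact hnodup
      exact (List.disjoint_of_nodup_append this) hv1 hv2
    have hut' : u ∉ t'.support := by
      intro hu
      exact hdisjsup u hu (Walk.end_mem_tail_support_of_ne hzu d')
    refine ⟨Walk.cons h₀ t', d'.reverse, ?_, hd'p.reverse, ?_, ?_, ?_, ?_, ?_, ?_⟩
    · rw [Walk.cons_isPath_iff]; exact ⟨ht'p, hut'⟩
    · have := congrArg Walk.length hspec
      rw [Walk.length_append] at this
      simp only [Walk.length_cons, Walk.length_reverse]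
      omega
    · simp
    · rw [Walk.length_reverse]
      rcases Nat.eq_zero_or_pos d'.length with h | h
      · exact absurd (Walk.eq_of_length_eq_zero h) hzu
      · exact h
    · intro v hv1 hv2
      rw [Walk.support_reverse, List.mem_reverse] at hv2
      rcases (by simpa using hv1 : v = u ∨ v ∈ t'.support) with rfl | hv1'
      · exact Or.inl rfl
      · rw [d'.support_eq_cons, List.mem_cons] at hv2
        rcases hv2 with rfl | hv2'
        · exact Or.inr rfl
        · exact absurd hv2' (fun h => hdisjsup v hv1' h)
    · intro v hv
      rcases (by simpa using hv : v = u ∨ v ∈ t'.support) with rfl | hv'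
      · simp
      · simp [Walk.support_takeUntil_subset _ hz' hv']
    · intro v hv
      rw [Walk.support_reverse, List.mem_reverse] at hv
      simp [Walk.support_dropUntil_subset _ hz' hv]

lemma mem_support_of_closed {u x : V} {c : G.Walk u u} (hnil : ¬ c.Nil) :
    x ∈ c.support ↔ x ∈ c.support.tail := by
  cases c with
  | nil => simp at hnil
  | cons h₀ c₀ =>
    simp only [Walk.support_cons, List.tail_cons, List.mem_cons]
    constructor
    · rintro (rfl | h)
      · exact c₀.end_mem_support
      · exact h
    · exact Or.inr

lemma length_rotate [DecidableEq V] {u z : V} {c : G.Walk u u} (hz : z ∈ c.support) :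
    (c.rotate _ hz).length = c.length := by
  rw [Walk.rotate, Walk.length_append, Nat.add_comm]
  conv_rhs => rw [← c.take_spec hz, Walk.length_append]

lemma mem_rotate [DecidableEq V] {u z x : V} {c : G.Walk u u} (hc : c.IsCycle)
    (hz : z ∈ c.support) : x ∈ (c.rotate _ hz).support ↔ x ∈ c.support := by
  rw [mem_support_of_closed (hc.rotate hz).not_nil, mem_support_of_closed hc.not_nil]
  exact (c.support_rotate _ hz).mem_iff

end Stmt17Aux

/-- Let `C₁` be an even cycle and `C₂` an odd cycle of `G`.
The even cycle `C₁` together with a pair of quasi-diagonal vertices `x₁, x₂` on it is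
encoded as two internally disjoint `(x₁,x₂)`-paths `p, q` (whose union is `C₁`) with
`|q| = |p| + 2` (for an even cycle, two vertices are quasi-diagonal exactly when the
two arcs they determine have lengths `|C₁|/2 - 1` and `|C₁|/2 + 1`, i.e. differ by 2).
If (1) `C₁, C₂` are vertex-disjoint and joined by two vertex-disjoint paths starting
at `x₁` and `x₂`, or (2) `C₁, C₂` meet in exactly one vertex `u`, the vertex `x₁` is
quasi-diagonal to `u` on `C₁`, and there is a path from `x₁` to `C₂ - u` avoiding `u`,
then `G` contains two cycles of consecutive odd lengths. -/
theorem stmt17 {V : Type*} (G : SimpleGraph V)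
    (hyp :
      -- (1) vertex-disjoint cycles joined by two disjoint paths whose origins on
      -- `C₁` are quasi-diagonal
      (∃ (x₁ x₂ : V) (p q : G.Walk x₁ x₂) (w : V) (c : G.Walk w w)
          (z₁ z₂ : V) (r₁ : G.Walk x₁ z₁) (r₂ : G.Walk x₂ z₂),
        p.IsPath ∧ q.IsPath ∧ 1 ≤ p.length ∧ q.length = p.length + 2 ∧
        (∀ v : V, v ∈ p.support → v ∈ q.support → v = x₁ ∨ v = x₂) ∧
        c.IsCycle ∧ Odd c.length ∧
        (∀ v : V, (v ∈ p.support ∨ v ∈ q.support) → v ∉ c.support) ∧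
        r₁.IsPath ∧ r₂.IsPath ∧ z₁ ∈ c.support ∧ z₂ ∈ c.support ∧
        (∀ v : V, v ∈ r₁.support → v ∉ r₂.support) ∧
        (∀ v : V, v ∈ r₁.support → v ≠ x₁ → v ≠ z₁ →
          v ∉ p.support ∧ v ∉ q.support ∧ v ∉ c.support) ∧
        (∀ v : V, v ∈ r₂.support → v ≠ x₂ → v ≠ z₂ →
          v ∉ p.support ∧ v ∉ q.support ∧ v ∉ c.support)) ∨
      -- (2) the cycles meet in exactly one vertex `u`, and there is a path from the
      -- vertex `x₁` quasi-diagonal to `u` on `C₁` to `C₂ - u` avoiding `u`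
      (∃ (u x₁ : V) (p q : G.Walk u x₁) (c : G.Walk u u) (z : V) (r : G.Walk x₁ z),
        p.IsPath ∧ q.IsPath ∧ 1 ≤ p.length ∧ q.length = p.length + 2 ∧
        (∀ v : V, v ∈ p.support → v ∈ q.support → v = u ∨ v = x₁) ∧
        c.IsCycle ∧ Odd c.length ∧
        (∀ v : V, (v ∈ p.support ∨ v ∈ q.support) → v ∈ c.support → v = u) ∧
        r.IsPath ∧ z ∈ c.support ∧ z ≠ u ∧ u ∉ r.support ∧
        (∀ v : V, v ∈ r.support → v ≠ x₁ → v ≠ z →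
          v ∉ p.support ∧ v ∉ q.support ∧ v ∉ c.support))) :
    ∃ n : ℕ, Odd n ∧ HasCycleLen G n ∧ HasCycleLen G (n + 2) := by
  classical
  open Stmt17Aux in
  rcases hyp with ⟨x₁, x₂, p, q, w, c, z₁, z₂, r₁, r₂, hp, hq, hp1, hqlen, hpq, hc, hcodd,
      hpqc, hr₁, hr₂, hz₁, hz₂, hr₁r₂, hr₁int, hr₂int⟩ |
    ⟨u, x₁, p, q, c, z, r, hp, hq, hp1, hqlen, hpq, hc, hcodd, hpqc, hr, hzc, hzu, hur, hrint⟩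
  · -- Case (1)
    have hx₁c : x₁ ∉ c.support := hpqc x₁ (Or.inl p.start_mem_support)
    have hx₂c : x₂ ∉ c.support := hpqc x₂ (Or.inl p.end_mem_support)
    have hz₁z₂ : z₁ ≠ z₂ := by
      intro h
      exact hr₁r₂ z₁ r₁.end_mem_support (h ▸ r₂.end_mem_support)
    have hr₁len : 1 ≤ r₁.length := by
      rcases Nat.eq_zero_or_pos r₁.length with h | h
      · exact absurd ((Walk.eq_of_length_eq_zero h) ▸ hz₁) hx₁c
      · exact h
    have hr₂len : 1 ≤ r₂.length := by
      rcases Nat.eq_zero_or_pos r₂.length with h | h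
      · exact absurd ((Walk.eq_of_length_eq_zero h) ▸ hz₂) hx₂c
      · exact h
    have hz₁' : z₁ ∈ (c.rotate _ hz₂).support := (mem_rotate hc hz₂).mpr hz₁
    obtain ⟨a, b, hap, hbp, hablen, ha1, hb1, -, hac, hbc⟩ :=
      cycle_split (hc.rotate hz₂) hz₁' hz₁z₂
    have hacc : ∀ v, v ∈ a.support → v ∈ c.support :=
      fun v hv => (mem_rotate hc hz₂).mp (hac v hv)
    have hbcc : ∀ v, v ∈ b.support → v ∈ c.support :=
      fun v hv => (mem_rotate hc hz₂).mp (hbc v hv)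
    have hablen' : a.length + b.length = c.length := by
      rw [hablen, length_rotate]
    have build : ∀ (A : G.Walk z₂ z₁), A.IsPath → 1 ≤ A.length →
        (∀ v, v ∈ A.support → v ∈ c.support) →
        HasCycleLen G (A.length + r₁.length + r₂.length + p.length) ∧
        HasCycleLen G (A.length + r₁.length + r₂.length + p.length + 2) := by
      intro A hA hA1 hAc
      have hS : (A.append r₁.reverse).IsPath := by
        apply path_append hA hr₁.reverse
        intro v hv1 hv2
        rw [Walk.support_reverse, List.mem_reverse] at hv2
        rcases eq_or_ne v x₁ with rfl | hvx
        · exact absurd (hAc _ hv1) hx₁c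
        rcases eq_or_ne v z₁ with rfl | hvz
        · rfl
        · exact absurd (hAc _ hv1) (hr₁int v hv2 hvx hvz).2.2
      set S := A.append r₁.reverse with hSdef
      have hSsup : ∀ v, v ∈ S.support → v ∈ A.support ∨ v ∈ r₁.support := by
        intro v hv
        rw [hSdef, Walk.mem_support_append_iff] at hv
        rcases hv with hv | hv
        · exact Or.inl hv
        · rw [Walk.support_reverse, List.mem_reverse] at hv
          exact Or.inr hv
      have hR : (r₂.append S).IsPath := by
        apply path_append hr₂ hS
        intro v hv1 hv2
        rcases hSsup v hv2 with hvA | hvr₁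
        · rcases eq_or_ne v x₂ with rfl | hvx
          · exact absurd (hAc _ hvA) hx₂c
          rcases eq_or_ne v z₂ with rfl | hvz
          · rfl
          · exact absurd (hAc _ hvA) (hr₂int v hv1 hvx hvz).2.2
        · exact absurd hv1 (fun h => hr₁r₂ v hvr₁ h)
      set R := r₂.append S with hRdef
      have hRsup : ∀ v, v ∈ R.support →
          v ∈ r₂.support ∨ v ∈ A.support ∨ v ∈ r₁.support := by
        intro v hv
        rw [hRdef, Walk.mem_support_append_iff] at hv
        rcases hv with hv | hv
        · exact Or.inl hv
        · exact Or.inr (hSsup v hv)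
      have hRlen : R.length = r₂.length + (A.length + r₁.length) := by
        rw [hRdef, hSdef, Walk.length_append, Walk.length_append, Walk.length_reverse]
      have hR2 : 2 ≤ R.length := by omega
      have key : ∀ (P : G.Walk x₁ x₂), P.IsPath →
          (∀ v, v ∈ P.support → v ∈ p.support ∨ v ∈ q.support) →
          HasCycleLen G (R.length + P.length) := by
        intro P hP hPsub
        have hcyc : (R.append P).IsCycle := by
          apply glue hR hP hR2
          intro v hv1 hv2
          have hvpq := hPsub v hv2
          rcases hRsup v hv1 with hvr₂ | hvA | hvr₁
          · rcases eq_or_ne v x₂ with rfl | hvx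
            · exact Or.inl rfl
            rcases eq_or_ne v z₂ with rfl | hvz
            · exact absurd hz₂ (hpqc v hvpq)
            · rcases hvpq with h | h
              · exact absurd h (hr₂int v hvr₂ hvx hvz).1
              · exact absurd h (hr₂int v hvr₂ hvx hvz).2.1
          · exact absurd (hAc v hvA) (hpqc v hvpq)
          · rcases eq_or_ne v x₁ with rfl | hvx
            · exact Or.inr rfl
            rcases eq_or_ne v z₁ with rfl | hvz
            · exact absurd hz₁ (hpqc v hvpq)
            · rcases hvpq with h | h
              · exact absurd h (hr₁int v hvr₁ hvx hvz).1
              · exact absurd h (hr₁int v hvr₁ hvx hvz).2.1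
        exact ⟨x₂, R.append P, hcyc, by rw [Walk.length_append]⟩
      constructor
      · obtain ⟨v0, w0, h1, h2⟩ := key p hp (fun v hv => Or.inl hv)
        exact ⟨v0, w0, h1, by omega⟩
      · obtain ⟨v0, w0, h1, h2⟩ := key q hq (fun v hv => Or.inr hv)
        exact ⟨v0, w0, h1, by omega⟩
    rcases Nat.even_or_odd (a.length + r₁.length + r₂.length + p.length) with heven | hodd
    · refine ⟨b.length + r₁.length + r₂.length + p.length, ?_,
        (build b hbp hb1 hbcc).1, (build b hbp hb1 hbcc).2⟩
      rw [Nat.odd_iff] at hcodd ⊢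
      rw [Nat.even_iff] at heven
      omega
    · exact ⟨a.length + r₁.length + r₂.length + p.length, hodd,
        (build a hap ha1 hacc).1, (build a hap ha1 hacc).2⟩
  · -- Case (2)
    have hx₁u : x₁ ≠ u := by
      intro h
      subst h
      have := (Walk.isPath_iff_eq_nil (p := p)).mp hp
      subst this
      simp at hp1
    have hx₁c : x₁ ∉ c.support := by
      intro h
      exact hx₁u (hpqc x₁ (Or.inl p.end_mem_support) h)
    have hrlen : 1 ≤ r.length := by
      rcases Nat.eq_zero_or_pos r.length with h | h
      · exact absurd ((Walk.eq_of_length_eq_zero h) ▸ hzc) hx₁c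
      · exact h
    obtain ⟨a, b, hap, hbp, hablen, ha1, hb1, -, hac, hbc⟩ := cycle_split hc hzc hzu
    have build : ∀ (A : G.Walk u z), A.IsPath → 1 ≤ A.length →
        (∀ v, v ∈ A.support → v ∈ c.support) →
        HasCycleLen G (A.length + r.length + p.length) ∧
        HasCycleLen G (A.length + r.length + p.length + 2) := by
      intro A hA hA1 hAc
      have hS : (A.append r.reverse).IsPath := by
        apply path_append hA hr.reverse
        intro v hv1 hv2
        rw [Walk.support_reverse, List.mem_reverse] at hv2
        rcases eq_or_ne v x₁ with rfl | hvx
        · exact absurd (hAc _ hv1) hx₁c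
        rcases eq_or_ne v z with rfl | hvz
        · rfl
        · exact absurd (hAc _ hv1) (hrint v hv2 hvx hvz).2.2
      set S := A.append r.reverse with hSdef
      have hSsup : ∀ v, v ∈ S.support → v ∈ A.support ∨ v ∈ r.support := by
        intro v hv
        rw [hSdef, Walk.mem_support_append_iff] at hv
        rcases hv with hv | hv
        · exact Or.inl hv
        · rw [Walk.support_reverse, List.mem_reverse] at hv
          exact Or.inr hv
      have hSlen : S.length = A.length + r.length := by
        rw [hSdef, Walk.length_append, Walk.length_reverse]
      have hS2 : 2 ≤ S.length := by omega
      have key : ∀ (P : G.Walk u x₁), P.IsPath →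
          (∀ v, v ∈ P.support → v ∈ p.support ∨ v ∈ q.support) →
          HasCycleLen G (S.length + P.length) := by
        intro P hP hPsub
        have hcyc : (S.append P.reverse).IsCycle := by
          apply glue hS hP.reverse hS2
          intro v hv1 hv2
          rw [Walk.support_reverse, List.mem_reverse] at hv2
          have hvpq := hPsub v hv2
          rcases hSsup v hv1 with hvA | hvr
          · exact Or.inl (hpqc v hvpq (hAc v hvA))
          · rcases eq_or_ne v x₁ with rfl | hvx
            · exact Or.inr rfl
            rcases eq_or_ne v z with rfl | hvz
            · exact absurd (hpqc v hvpq hzc) hzu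
            · rcases hvpq with h | h
              · exact absurd h (hrint v hvr hvx hvz).1
              · exact absurd h (hrint v hvr hvx hvz).2.1
        exact ⟨u, S.append P.reverse, hcyc,
          by rw [Walk.length_append, Walk.length_reverse]⟩
      constructor
      · obtain ⟨v0, w0, h1, h2⟩ := key p hp (fun v hv => Or.inl hv)
        exact ⟨v0, w0, h1, by omega⟩
      · obtain ⟨v0, w0, h1, h2⟩ := key q hq (fun v hv => Or.inr hv)
        exact ⟨v0, w0, h1, by omega⟩
    rcases Nat.even_or_odd (a.length + r.length + p.length) with heven | hodd
    · refine ⟨b.length + r.length + p.length, ?_,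
        (build b hbp hb1 hbc).1, (build b hbp hb1 hbc).2⟩
      rw [Nat.odd_iff] at hcodd ⊢
      rw [Nat.even_iff] at heven
      omega
    · exact ⟨a.length + r.length + p.length, hodd,
        (build a hap ha1 hac).1, (build a hap ha1 hac).2⟩
end
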